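/- (Theorem 1.) Let l ≥ 1 be an integer, let w be chosen uniformly at random from {0,1}^l, and let x = x_1…x_n be generated by a Bernoulli process with P(0) = p ∈ (0,1), independently of w. Set v_{1-l}…v_0 = w and v_1…v_n = φ_{l,w}(x). Then the sequence v is an order-l Markov chain with the two-faced transition law T_l: for every i ∈ {1,…,n} and every u = u_1…u_l ∈ {0,1}^l with P(v_{i-l}…v_{i-1} = u) > 0, conditionally on the entire past v_{1-l}…v_{i-1} with v_{i-l}…v_{i-1} = u, the probability that v_i = 0 equals p if Σ_{j=1}^{l} u_j is even and equals 1 − p if Σ_{j=1}^{l} u_j is odd. -/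

import Mathlib

/-- Parity of a list of bits (`true` ↔ an odd number of `true`s, i.e. odd sum). -/
def parity (L : List Bool) : Bool := L.foldr Bool.xor false

/-- The sequence `w_1 … w_l v_1 … v_m` (as a list) produced by the two-faced
transformation `φ_{l,w}`: the first `w.length` entries are the word `w`, and each
subsequent entry is `v_i = x_i` if the sum of the preceding `w.length` entries is even,
and `v_i = 1 - x_i` if it is odd (bits are booleans, `true` ↔ 1, so flipping is `xor true`). -/
def phiList (w : List Bool) (x : ℕ → Bool) : ℕ → List Bool
  | 0 => w
  | m + 1 => phiList w x m ++ [Bool.xor (x m) (parity ((phiList w x m).drop m))]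

/-- The full transformed sequence `v_{1-l} … v_0 v_1 … v_n` indexed by
absolute positions `0, …, l + n - 1` (position `k` holds `v_{k-l+1}`). -/
def vFull (l n : ℕ) (w : Fin l → Bool) (x : Fin n → Bool) (k : ℕ) : Bool :=
  (phiList (List.ofFn w) (fun m => if h : m < n then x ⟨m, h⟩ else false) n).getD k false

/-- The two-faced transformation `φ_{l,w} : {0,1}^n → {0,1}^n`. -/
def phi (l n : ℕ) (w : Fin l → Bool) (x : Fin n → Bool) : Fin n → Bool :=
  fun i => vFull l n w x (l + i)

open scoped Classical

/-- The probability of the outcome `ω = (w, x)` when `w` is uniform on `{0,1}^l` and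
`x_1 … x_n` are i.i.d. letters, each equal to `0` (i.e. `false`) with probability `p`. -/
noncomputable def probWX (l n : ℕ) (p : ℝ) (ω : (Fin l → Bool) × (Fin n → Bool)) : ℝ :=
  ((2 : ℝ) ^ l)⁻¹ * ∏ i, (if ω.2 i then 1 - p else p)

lemma phiList_length (w : List Bool) (x : ℕ → Bool) (m : ℕ) :
    (phiList w x m).length = w.length + m := by
  induction m with
  | zero => rfl
  | succ m ih => simp [phiList, ih]; omega

lemma phiList_getD_stable (w : List Bool) (x : ℕ → Bool) {m m' k : ℕ}
    (hk : k < w.length + m) (hmm : m ≤ m') :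
    (phiList w x m').getD k false = (phiList w x m).getD k false := by
  induction m' with
  | zero => interval_cases m; rfl
  | succ m' ih =>
    rcases Nat.eq_or_lt_of_le hmm with h | h
    · rw [h]
    · have hm : m ≤ m' := by omega
      show (phiList w x m' ++ _).getD k false = _
      rw [List.getD_append]
      · exact ih hm
      · rw [phiList_length]; omega

lemma phiList_congr (w : List Bool) {x y : ℕ → Bool} {m : ℕ}
    (h : ∀ j < m, x j = y j) : phiList w x m = phiList w y m := by
  induction m with
  | zero => rfl
  | succ m ih =>
    have ihm : phiList w x m = phiList w y m := ih (fun j hj => h j (by omega))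
    show phiList w x m ++ _ = phiList w y m ++ _
    rw [ihm, h m (by omega)]

lemma vFull_eq_getD {l n : ℕ} (w : Fin l → Bool) (x : Fin n → Bool) {m k : ℕ}
    (hm : m ≤ n) (hk : k < l + m) :
    vFull l n w x k =
      (phiList (List.ofFn w) (fun t => if h : t < n then x ⟨t, h⟩ else false) m).getD k false := by
  unfold vFull
  exact phiList_getD_stable _ _ (by simpa using hk) hm

lemma vFull_congr {l n : ℕ} (w : Fin l → Bool) {x y : Fin n → Bool} {m : ℕ} (hm : m ≤ n)
    (hxy : ∀ j : Fin n, (j : ℕ) < m → x j = y j) {k : ℕ} (hk : k < l + m) :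
    vFull l n w x k = vFull l n w y k := by
  rw [vFull_eq_getD w x hm hk, vFull_eq_getD w y hm hk,
    phiList_congr (List.ofFn w) (x := fun t => if h : t < n then x ⟨t, h⟩ else false)
      (y := fun t => if h : t < n then y ⟨t, h⟩ else false) (m := m) ?_]
  intro j hj
  by_cases h : j < n
  · simp only [dif_pos h]; exact hxy ⟨j, h⟩ hj
  · simp [h]

lemma vFull_step {l n : ℕ} (w : Fin l → Bool) (x : Fin n → Bool) {i : ℕ}
    (hi1 : 1 ≤ i) (hi2 : i ≤ n) :
    vFull l n w x (l + i - 1) =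
      Bool.xor (x ⟨i - 1, by omega⟩)
        (parity (List.ofFn (fun j : Fin l => vFull l n w x (i - 1 + (j : ℕ))))) := by
  set x' : ℕ → Bool := fun t => if h : t < n then x ⟨t, h⟩ else false with hx'
  have hk : l + i - 1 < l + i := by omega
  rw [vFull_eq_getD w x hi2 hk]
  have hstep : phiList (List.ofFn w) x' i =
      phiList (List.ofFn w) x' (i - 1) ++
        [Bool.xor (x' (i - 1)) (parity ((phiList (List.ofFn w) x' (i - 1)).drop (i - 1)))] := by
    conv_lhs => rw [show i = (i - 1) + 1 by omega]
    rfl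
  rw [hstep]
  have hlen : (phiList (List.ofFn w) x' (i - 1)).length = l + i - 1 := by
    rw [phiList_length]; simp; omega
  have hdrop : (phiList (List.ofFn w) x' (i - 1)).drop (i - 1) =
      List.ofFn (fun j : Fin l => vFull l n w x (i - 1 + (j : ℕ))) := by
    apply List.ext_getElem
    · simp [hlen]; omega
    · intro j h1 h2
      have hj : j < l := by simpa using h2
      rw [List.getElem_drop, List.getElem_ofFn]
      have hkk : i - 1 + j < l + (i - 1) := by omega
      rw [vFull_eq_getD w x (by omega) hkk, List.getD_eq_getElem]
  rw [hdrop]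
  have : x' (i - 1) = x ⟨i - 1, by omega⟩ := by
    simp only [hx']; rw [dif_pos (by omega)]
  rw [← this]
  rw [List.getD_eq_getElem _ _ (by simp [hlen])]
  have := List.getElem_concat_length (l := phiList (List.ofFn w) x' (i-1))
    (a := Bool.xor (x' (i - 1)) (parity (List.ofFn fun j : Fin l => vFull l n w x (i - 1 + (j:ℕ))))) (i := l + i - 1) hlen.symm
  rw [this]

lemma parity_false_iff (L : List Bool) :
    parity L = false ↔ Even (L.map (fun b => if b then (1:ℕ) else 0)).sum := by
  induction L with
  | nil => simp [parity]
  | cons a L ih =>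
    have hpar : parity (a :: L) = Bool.xor a (parity L) := rfl
    cases a
    · simpa [hpar] using ih
    · simp only [hpar, List.map_cons, List.sum_cons, if_true, Bool.true_xor, Bool.not_eq_false']
      rw [show (1 : ℕ) + _ = _ + 1 from Nat.add_comm _ _, Nat.even_add_one, ← ih]
      cases parity L <;> simp

/-- **Theorem 1.** Let `l ≥ 1`, let `w` be uniform on `{0,1}^l` and let `x = x_1…x_n` be an
independent Bernoulli sequence with `P(0) = p ∈ (0,1)`.  Set `v_{1-l}…v_0 = w` and
`v_1…v_n = φ_{l,w}(x)` (absolute position `k ∈ {0,…,l+n-1}` of `vFull` holds `v_{k-l+1}`).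
Then `v` is an order-`l` Markov chain with the two-faced transition law `T_l`: for every
`i ∈ {1,…,n}` and `u ∈ {0,1}^l`, conditionally on any entire past `v_{1-l} … v_{i-1}` of
positive probability whose last `l` letters `v_{i-l}…v_{i-1}` equal `u`, the probability
that `v_i = 0` is `p` when `Σ_j u_j` is even, and `1 - p` when it is odd. -/
theorem phi_of_bernoulli_is_two_faced (l n : ℕ) (hl : 1 ≤ l) (p : ℝ)
    (hp : p ∈ Set.Ioo (0 : ℝ) 1) (i : ℕ) (hi1 : 1 ≤ i) (hi2 : i ≤ n)
    (u : Fin l → Bool) (past : ℕ → Bool) (hu : ∀ j : Fin l, past (i - 1 + (j : ℕ)) = u j)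
    (hpos : 0 < ∑ ω ∈ Finset.univ.filter
        (fun ω : (Fin l → Bool) × (Fin n → Bool) =>
          ∀ k < l + i - 1, vFull l n ω.1 ω.2 k = past k),
        probWX l n p ω) :
    (∑ ω ∈ Finset.univ.filter
        (fun ω : (Fin l → Bool) × (Fin n → Bool) =>
          (∀ k < l + i - 1, vFull l n ω.1 ω.2 k = past k) ∧
            vFull l n ω.1 ω.2 (l + i - 1) = false),
        probWX l n p ω) /
      (∑ ω ∈ Finset.univ.filter
        (fun ω : (Fin l → Bool) × (Fin n → Bool) =>
          ∀ k < l + i - 1, vFull l n ω.1 ω.2 k = past k),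
        probWX l n p ω) =
    (if Even (∑ j : Fin l, (if u j then 1 else 0 : ℕ)) then p else 1 - p) := by
  have hin : i - 1 < n := by omega
  set idx : Fin n := ⟨i - 1, hin⟩ with hidx
  set b : Bool := parity (List.ofFn u) with hb
  set P : (Fin l → Bool) × (Fin n → Bool) → Prop :=
    fun ω => ∀ k < l + i - 1, vFull l n ω.1 ω.2 k = past k with hP
  -- key: under P, v at position l+i-1 is xor of x_{i-1} with parity of u
  have hkey : ∀ ω : (Fin l → Bool) × (Fin n → Bool), P ω →
      vFull l n ω.1 ω.2 (l + i - 1) = Bool.xor (ω.2 idx) b := by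
    intro ω hω
    rw [vFull_step ω.1 ω.2 hi1 hi2]
    have hlist : (fun j : Fin l => vFull l n ω.1 ω.2 (i - 1 + (j : ℕ))) = u := by
      funext j
      rw [hω _ (by omega), hu j]
    rw [hlist]
  -- numerator event equals { P ∧ x_{i-1} = b }
  have hnumset : (Finset.univ.filter
        (fun ω : (Fin l → Bool) × (Fin n → Bool) =>
          (∀ k < l + i - 1, vFull l n ω.1 ω.2 k = past k) ∧
            vFull l n ω.1 ω.2 (l + i - 1) = false)) =
      (Finset.univ.filter
        (fun ω : (Fin l → Bool) × (Fin n → Bool) => P ω ∧ ω.2 idx = b)) := by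
    apply Finset.filter_congr
    intro ω _
    constructor
    · rintro ⟨h1, h2⟩
      refine ⟨h1, ?_⟩
      rw [hkey ω h1] at h2
      cases hωi : ω.2 idx <;> cases hbb : b <;> simp [hωi, hbb] at h2 ⊢
    · rintro ⟨h1, h2⟩
      refine ⟨h1, ?_⟩
      rw [hkey ω h1, h2]
      cases b <;> simp
  -- factor probability through coordinate idx
  set g : (Fin l → Bool) × (Fin n → Bool) → ℝ :=
    fun ω => ((2 : ℝ) ^ l)⁻¹ * ∏ j ∈ Finset.univ.erase idx, (if ω.2 j then 1 - p else p)
    with hg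
  have hfg : ∀ ω, probWX l n p ω = (if ω.2 idx then 1 - p else p) * g ω := by
    intro ω
    unfold probWX
    rw [hg, ← Finset.mul_prod_erase Finset.univ _ (Finset.mem_univ idx)]
    ring
  -- flipping involution
  set F : (Fin l → Bool) × (Fin n → Bool) → (Fin l → Bool) × (Fin n → Bool) :=
    fun ω => (ω.1, Function.update ω.2 idx (!(ω.2 idx))) with hF
  have hFF : ∀ ω, F (F ω) = ω := by
    rintro ⟨w, x⟩
    simp only [hF, Function.update_self, Bool.not_not, Function.update_idem,
      Function.update_eq_self]
  have hFv : ∀ (ω : (Fin l → Bool) × (Fin n → Bool)) k, k < l + i - 1 →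
      vFull l n (F ω).1 (F ω).2 k = vFull l n ω.1 ω.2 k := by
    intro ω k hk
    apply vFull_congr ω.1 (m := i - 1) (by omega) ?_ (by omega)
    intro j hj
    have hne : j ≠ idx := by
      intro hji
      rw [hji] at hj
      simp only [hidx] at hj
      omega
    simp only [hF]
    exact Function.update_of_ne hne _ _
  have hFP : ∀ ω, P ω → P (F ω) := by
    intro ω hω k hk
    rw [hFv ω k hk]; exact hω k hk
  have hgF : ∀ ω, g (F ω) = g ω := by
    intro ω
    simp only [hg]
    congr 1
    exact Finset.prod_congr rfl fun j hj => by
      simp only [hF, Function.update_of_ne (Finset.ne_of_mem_erase hj)]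
  have hFb : ∀ ω : (Fin l → Bool) × (Fin n → Bool), (F ω).2 idx = !(ω.2 idx) := by
    intro ω; simp [hF]
  -- the two halves have equal g-mass
  have hAB : (∑ ω ∈ Finset.univ.filter (fun ω => P ω ∧ ω.2 idx = b), g ω) =
      (∑ ω ∈ Finset.univ.filter (fun ω => P ω ∧ ω.2 idx = !b), g ω) := by
    apply Finset.sum_nbij' F F
    · intro ω hω
      simp only [Finset.mem_filter, Finset.mem_univ, true_and] at hω ⊢
      refine ⟨hFP ω hω.1, ?_⟩
      show Function.update ω.2 idx (!ω.2 idx) idx = !b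
      rw [Function.update_self, hω.2]
    · intro ω hω
      simp only [Finset.mem_filter, Finset.mem_univ, true_and] at hω ⊢
      refine ⟨hFP ω hω.1, ?_⟩
      show Function.update ω.2 idx (!ω.2 idx) idx = b
      rw [Function.update_self, hω.2, Bool.not_not]
    · intro ω _; exact hFF ω
    · intro ω _; exact hFF ω
    · intro ω _; exact (hgF ω).symm
  -- splitting the denominator
  have hsplitset : (Finset.univ.filter P) =
      (Finset.univ.filter (fun ω => P ω ∧ ω.2 idx = b)) ∪
      (Finset.univ.filter (fun ω => P ω ∧ ω.2 idx = !b)) := by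
    ext ω
    simp only [Finset.mem_filter, Finset.mem_union, Finset.mem_univ, true_and]
    cases hωi : ω.2 idx <;> cases hbb : b <;> simp
  have hdisj : Disjoint (Finset.univ.filter (fun ω => P ω ∧ ω.2 idx = b))
      (Finset.univ.filter (fun ω => P ω ∧ ω.2 idx = !b)) := by
    rw [Finset.disjoint_left]
    intro ω h1 h2
    simp only [Finset.mem_filter] at h1 h2
    have hbb : b = !b := h1.2.2.symm.trans h2.2.2
    exact absurd hbb (by simp)
  set qb : ℝ := if b then 1 - p else p with hqb
  set SA : ℝ := ∑ ω ∈ Finset.univ.filter (fun ω => P ω ∧ ω.2 idx = b), g ω with hSA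
  have hnumval : (∑ ω ∈ Finset.univ.filter (fun ω => P ω ∧ ω.2 idx = b), probWX l n p ω)
      = qb * SA := by
    rw [hSA, Finset.mul_sum]
    apply Finset.sum_congr rfl
    intro ω hω
    simp only [Finset.mem_filter] at hω
    rw [hfg ω, hω.2.2]
  have hnumval' : (∑ ω ∈ Finset.univ.filter (fun ω => P ω ∧ ω.2 idx = !b), probWX l n p ω)
      = (1 - qb) * SA := by
    rw [hAB, Finset.mul_sum]
    apply Finset.sum_congr rfl
    intro ω hω
    simp only [Finset.mem_filter] at hω
    rw [hfg ω, hω.2.2]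
    congr 1
    rw [hqb]
    by_cases hbb : b = true
    · rw [hbb]; norm_num
    · have hbf : b = false := by simpa using hbb
      rw [hbf]; norm_num
  have hden : (∑ ω ∈ Finset.univ.filter P, probWX l n p ω) = SA := by
    rw [hsplitset, Finset.sum_union hdisj, hnumval, hnumval']
    ring
  have hdenpos : (0 : ℝ) < SA := by
    rw [← hden]; exact hpos
  have hbtarget : Even (∑ j : Fin l, (if u j then 1 else 0 : ℕ)) ↔ b = false := by
    rw [hb, parity_false_iff, List.map_ofFn, List.sum_ofFn]
    exact Iff.rfl.symm
  calc (∑ ω ∈ Finset.univ.filter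
        (fun ω : (Fin l → Bool) × (Fin n → Bool) =>
          (∀ k < l + i - 1, vFull l n ω.1 ω.2 k = past k) ∧
            vFull l n ω.1 ω.2 (l + i - 1) = false), probWX l n p ω) /
      (∑ ω ∈ Finset.univ.filter
        (fun ω : (Fin l → Bool) × (Fin n → Bool) =>
          ∀ k < l + i - 1, vFull l n ω.1 ω.2 k = past k), probWX l n p ω)
      = (qb * SA) / SA := by rw [hnumset, hnumval, hden]
    _ = qb := by rw [mul_div_assoc, div_self (ne_of_gt hdenpos), mul_one]
    _ = _ := by
        by_cases he : Even (∑ j : Fin l, (if u j then 1 else 0 : ℕ))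
        · have hbf : b = false := hbtarget.mp he
          rw [if_pos he, hqb, hbf]
          simp
        · have hbt : b = true := by
            by_cases hbb : b = true
            · exact hbb
            · exact absurd (hbtarget.mpr (by simpa using hbb)) he
          rw [if_neg he, hqb, hbt]
          simp
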